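/- arXiv:1206.0439 — 2 statements merged into one kernel-verified Lean document; each statement's English description precedes it below -/
import Mathlib

section
/- Let N be a positive integer, W a finite-dimensional real inner product space, and D a skew-adjoint linear endomorphism of W (i.e. ⟨D x, y⟩ = −⟨x, D y⟩ for all x, y ∈ W). Then, with respect to the inner product ⟨f, g⟩ = N⁻¹ · ∑_{t ∈ ZMod N} ⟨f(t), g(t)⟩ on Map(ZMod N, W), the adjoint of L̂_D is −Ľ_D; that is, ⟨L̂_D f, g⟩ = −⟨f, Ľ_D g⟩ for all f, g ∈ Map(ZMod N, W). -/
open NormedSpace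
open scoped RealInnerProductSpace

/-- The discrete operator `L̂_D` on `Map(ZMod N, W)`:
`(L̂_D f)(t) = N • (exp(D/N)(f(t+1)) − f t)`. -/
noncomputable def Lhat {W : Type*} [NormedAddCommGroup W] [NormedSpace ℝ W]
    (N : ℕ) (D : W →L[ℝ] W) (f : ZMod N → W) : ZMod N → W :=
  fun t => (N : ℝ) • (NormedSpace.exp (((N : ℝ)⁻¹) • D) (f (t + 1)) - f t)

/-- The discrete operator `Ľ_D` on `Map(ZMod N, W)`:
`(Ľ_D g)(t) = N • (g t − exp(−D/N)(g(t−1)))`. -/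
noncomputable def Lcheck {W : Type*} [NormedAddCommGroup W] [NormedSpace ℝ W]
    (N : ℕ) (D : W →L[ℝ] W) (g : ZMod N → W) : ZMod N → W :=
  fun t => (N : ℝ) • (g t - NormedSpace.exp (-((N : ℝ)⁻¹) • D) (g (t - 1)))

/-- If `D` is skew-adjoint, then with respect to the inner product
`⟨f, g⟩ = N⁻¹ ∑_t ⟨f t, g t⟩` on `Map(ZMod N, W)`, the adjoint of `L̂_D` is `−Ľ_D`. -/
theorem lhat_adjoint_eq_neg_lcheck
    {W : Type*} [NormedAddCommGroup W] [InnerProductSpace ℝ W] [FiniteDimensional ℝ W]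
    (N : ℕ) [NeZero N] (D : W →L[ℝ] W)
    (hD : ∀ x y : W, ⟪D x, y⟫ = -⟪x, D y⟫)
    (f g : ZMod N → W) :
    (N : ℝ)⁻¹ * ∑ t : ZMod N, ⟪Lhat N D f t, g t⟫
      = -((N : ℝ)⁻¹ * ∑ t : ZMod N, ⟪f t, Lcheck N D g t⟫) := by
  have hcomplete : CompleteSpace W := FiniteDimensional.complete ℝ W
  have hadj : ContinuousLinearMap.adjoint D = -D := by
    apply ContinuousLinearMap.ext; intro x
    apply ext_inner_right ℝ; intro y
    rw [ContinuousLinearMap.adjoint_inner_left]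
    simp [ContinuousLinearMap.neg_apply, inner_neg_left, hD x y]
  have hstar : ContinuousLinearMap.adjoint (NormedSpace.exp (-((N : ℝ)⁻¹) • D))
      = NormedSpace.exp (((N : ℝ)⁻¹) • D) := by
    have : ContinuousLinearMap.adjoint (NormedSpace.exp (-((N : ℝ)⁻¹) • D))
        = star (NormedSpace.exp (-((N : ℝ)⁻¹) • D)) := rfl
    rw [this, star_exp]
    congr 1
    rw [star_smul]
    simp only [starRingEnd_apply, star_trivial]
    show -(N : ℝ)⁻¹ • ContinuousLinearMap.adjoint D = _
    rw [hadj]; module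
  have key : ∀ x y : W, ⟪NormedSpace.exp (((N : ℝ)⁻¹) • D) x, y⟫
      = ⟪x, NormedSpace.exp (-((N : ℝ)⁻¹) • D) y⟫ := by
    intro x y
    rw [← hstar, ContinuousLinearMap.adjoint_inner_left]
  have hshift : ∑ t : ZMod N, ⟪NormedSpace.exp (((N : ℝ)⁻¹) • D) (f (t + 1)), g t⟫
      = ∑ t : ZMod N, ⟪f t, NormedSpace.exp (-((N : ℝ)⁻¹) • D) (g (t - 1))⟫ := by
    refine Fintype.sum_equiv (Equiv.addRight (1 : ZMod N)) _ _ fun t => ?_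
    simp [Equiv.coe_addRight, key]
  simp only [Lhat, Lcheck, inner_smul_left, inner_smul_right, inner_sub_left,
    inner_sub_right, starRingEnd_apply, star_trivial]
  simp only [mul_sub, Finset.sum_sub_distrib, ← Finset.mul_sum]
  rw [hshift]; ring
end

section
/- Let N be a positive integer, W₁ and W₂ finite-dimensional real inner product spaces, J : W₁ → W₂ a linear isometric equivalence, D₁ a skew-adjoint linear endomorphism of W₁, and D₂ a linear endomorphism of W₂ satisfying J ∘ D₁ = D₂ ∘ J. Equip H := Map(ZMod N, W₁) × Map(ZMod N, W₂) with the inner product ⟨(f, g), (f', g')⟩ = N⁻¹ · ∑_{t ∈ ZMod N} ( ⟨f(t), f'(t)⟩ + ⟨g(t), g'(t)⟩ ). Then the linear endomorphism T of H defined by T(f, g) = ( −J⁻¹ ∘ (Ľ_{D₂} g), J ∘ (L̂_{D₁} f) ) is symmetric: ⟨(f, g), T(f', g')⟩ = ⟨T(f, g), (f', g')⟩ for all (f, g), (f', g') ∈ H. -/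
open NormedSpace
open scoped RealInnerProductSpace

/-- The block operator `T(f, g) = (−J⁻¹ ∘ (Ľ_{D₂} g), J ∘ (L̂_{D₁} f))` on
`Map(ZMod N, W₁) × Map(ZMod N, W₂)`. -/
noncomputable def blockLT {W₁ W₂ : Type*}
    [NormedAddCommGroup W₁] [InnerProductSpace ℝ W₁]
    [NormedAddCommGroup W₂] [InnerProductSpace ℝ W₂]
    (N : ℕ) (J : W₁ ≃ₗᵢ[ℝ] W₂) (D₁ : W₁ →L[ℝ] W₁) (D₂ : W₂ →L[ℝ] W₂)
    (p : (ZMod N → W₁) × (ZMod N → W₂)) : (ZMod N → W₁) × (ZMod N → W₂) :=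
  (fun t => -(J.symm (Lcheck N D₂ p.2 t)), fun t => J (Lhat N D₁ p.1 t))

/-- Conjugation by a continuous linear equivalence, as a ring homomorphism on
endomorphism algebras. -/
def conjRingHom {W₁ W₂ : Type*}
    [NormedAddCommGroup W₁] [NormedSpace ℝ W₁]
    [NormedAddCommGroup W₂] [NormedSpace ℝ W₂]
    (e : W₁ ≃L[ℝ] W₂) : (W₁ →L[ℝ] W₁) →+* (W₂ →L[ℝ] W₂) where
  toFun T := (e : W₁ →L[ℝ] W₂).comp (T.comp (e.symm : W₂ →L[ℝ] W₁))
  map_one' := by ext x; simp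
  map_mul' S T := by ext x; simp [ContinuousLinearMap.mul_apply]
  map_zero' := by ext x; simp
  map_add' S T := by ext x; simp

lemma conjRingHom_continuous {W₁ W₂ : Type*}
    [NormedAddCommGroup W₁] [NormedSpace ℝ W₁]
    [NormedAddCommGroup W₂] [NormedSpace ℝ W₂]
    (e : W₁ ≃L[ℝ] W₂) : Continuous (conjRingHom e) := by
  exact (e.arrowCongr e).continuous

/-- A linear isometric equivalence intertwining `D₁` and `D₂` also intertwines their
exponentials. -/
lemma map_exp_of_comm {W₁ W₂ : Type*}
    [NormedAddCommGroup W₁] [InnerProductSpace ℝ W₁] [FiniteDimensional ℝ W₁]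
    [NormedAddCommGroup W₂] [InnerProductSpace ℝ W₂] [FiniteDimensional ℝ W₂]
    (J : W₁ ≃ₗᵢ[ℝ] W₂) (D₁ : W₁ →L[ℝ] W₁) (D₂ : W₂ →L[ℝ] W₂)
    (hJD : ∀ x : W₁, J (D₁ x) = D₂ (J x)) (c : ℝ) (x : W₁) :
    J (NormedSpace.exp (c • D₁) x) = NormedSpace.exp (c • D₂) (J x) := by
  set e : W₁ ≃L[ℝ] W₂ := { J.toLinearEquiv with
    continuous_toFun := J.continuous
    continuous_invFun := J.symm.continuous }
  have key : conjRingHom e (NormedSpace.exp (c • D₁)) = NormedSpace.exp (c • D₂) := by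
    let +nondep : NormedAlgebra ℚ (W₁ →L[ℝ] W₁) := .restrictScalars ℚ ℝ _
    let +nondep : NormedAlgebra ℚ (W₂ →L[ℝ] W₂) := .restrictScalars ℚ ℝ _
    rw [map_exp (conjRingHom e) (conjRingHom_continuous e)]
    congr 1
    ext y
    have : e (e.symm y) = y := e.apply_symm_apply y
    simp only [conjRingHom, RingHom.coe_mk, MonoidHom.coe_mk, OneHom.coe_mk,
      ContinuousLinearMap.comp_apply, ContinuousLinearMap.coe_coe,
      ContinuousLinearMap.smul_apply]
    show e (c • D₁ (e.symm y)) = c • D₂ y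
    rw [map_smul]
    congr 1
    have h1 : e (D₁ (e.symm y)) = D₂ (e (e.symm y)) := hJD (e.symm y)
    rw [h1, e.apply_symm_apply]
  have h2 : (conjRingHom e (NormedSpace.exp (c • D₁))) (J x) = NormedSpace.exp (c • D₂) (J x) := by
    rw [key]
  rw [← h2]
  show J (NormedSpace.exp (c • D₁) x) = J ((NormedSpace.exp (c • D₁)) (J.symm (J x)))
  rw [J.symm_apply_apply]

/-- The exponential of a skew-adjoint operator satisfies
`⟪exp(c•D) x, y⟫ = ⟪x, exp(-c•D) y⟫`. -/
lemma exp_skew_inner {W : Type*}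
    [NormedAddCommGroup W] [InnerProductSpace ℝ W] [FiniteDimensional ℝ W]
    (D : W →L[ℝ] W) (hD : ∀ x y : W, ⟪D x, y⟫ = -⟪x, D y⟫) (c : ℝ) (x y : W) :
    ⟪NormedSpace.exp (c • D) x, y⟫ = ⟪x, NormedSpace.exp (-c • D) y⟫ := by
  have hadj : ContinuousLinearMap.adjoint D = -D := by
    symm
    rw [ContinuousLinearMap.eq_adjoint_iff]
    intro u v
    rw [ContinuousLinearMap.neg_apply, inner_neg_left, hD, neg_neg]
  have hstar : star (c • D) = -c • D := by
    rw [star_smul, ContinuousLinearMap.star_eq_adjoint, hadj]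
    simp [smul_neg, neg_smul]
  have : ContinuousLinearMap.adjoint (NormedSpace.exp (c • D)) = NormedSpace.exp (-c • D) := by
    rw [← ContinuousLinearMap.star_eq_adjoint, star_exp, hstar]
  rw [← ContinuousLinearMap.adjoint_inner_right, this]

/-- Core adjointness: `∑ ⟪L̂ f, g⟫ = -∑ ⟪f, Ľ g⟫` for skew-adjoint `D`. -/
lemma sum_Lhat_inner {W : Type*}
    [NormedAddCommGroup W] [InnerProductSpace ℝ W] [FiniteDimensional ℝ W]
    (N : ℕ) [NeZero N] (D : W →L[ℝ] W) (hD : ∀ x y : W, ⟪D x, y⟫ = -⟪x, D y⟫)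
    (f g : ZMod N → W) :
    ∑ t : ZMod N, ⟪Lhat N D f t, g t⟫ = -∑ t : ZMod N, ⟪f t, Lcheck N D g t⟫ := by
  have key : ∀ t : ZMod N, ⟪Lhat N D f t, g t⟫
      = (N : ℝ) * ⟪f (t + 1), NormedSpace.exp (-((N : ℝ)⁻¹) • D) (g t)⟫ - (N : ℝ) * ⟪f t, g t⟫ := by
    intro t
    simp only [Lhat, real_inner_smul_left, inner_sub_left]
    rw [exp_skew_inner D hD ((N : ℝ)⁻¹)]
    ring
  have key2 : ∀ t : ZMod N, ⟪f t, Lcheck N D g t⟫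
      = (N : ℝ) * ⟪f t, g t⟫ - (N : ℝ) * ⟪f t, NormedSpace.exp (-((N : ℝ)⁻¹) • D) (g (t - 1))⟫ := by
    intro t
    simp only [Lcheck, real_inner_smul_right, inner_sub_right]
    ring
  have shift : ∑ t : ZMod N, (N : ℝ) * ⟪f (t + 1), NormedSpace.exp (-((N : ℝ)⁻¹) • D) (g t)⟫
      = ∑ t : ZMod N, (N : ℝ) * ⟪f t, NormedSpace.exp (-((N : ℝ)⁻¹) • D) (g (t - 1))⟫ := by
    apply Fintype.sum_equiv (Equiv.addRight (1 : ZMod N))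
    intro t
    simp
  simp only [key, key2, Finset.sum_sub_distrib]
  rw [shift]
  ring

/-- If `J : W₁ ≃ W₂` is a linear isometric equivalence, `D₁` is skew-adjoint and
`J ∘ D₁ = D₂ ∘ J`, then `T(f, g) = (−J⁻¹ ∘ Ľ_{D₂} g, J ∘ L̂_{D₁} f)` is symmetric with
respect to the inner product `⟨(f,g),(f',g')⟩ = N⁻¹ ∑_t (⟨f t, f' t⟩ + ⟨g t, g' t⟩)`. -/
theorem blockLT_symmetric
    {W₁ W₂ : Type*}
    [NormedAddCommGroup W₁] [InnerProductSpace ℝ W₁] [FiniteDimensional ℝ W₁]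
    [NormedAddCommGroup W₂] [InnerProductSpace ℝ W₂] [FiniteDimensional ℝ W₂]
    (N : ℕ) [NeZero N] (J : W₁ ≃ₗᵢ[ℝ] W₂) (D₁ : W₁ →L[ℝ] W₁) (D₂ : W₂ →L[ℝ] W₂)
    (hD₁ : ∀ x y : W₁, ⟪D₁ x, y⟫ = -⟪x, D₁ y⟫)
    (hJD : ∀ x : W₁, J (D₁ x) = D₂ (J x)) :
    ∀ p q : (ZMod N → W₁) × (ZMod N → W₂),
      (N : ℝ)⁻¹ * ∑ t : ZMod N,
          (⟪p.1 t, (blockLT N J D₁ D₂ q).1 t⟫ + ⟪p.2 t, (blockLT N J D₁ D₂ q).2 t⟫)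
        = (N : ℝ)⁻¹ * ∑ t : ZMod N,
            (⟪(blockLT N J D₁ D₂ p).1 t, q.1 t⟫ + ⟪(blockLT N J D₁ D₂ p).2 t, q.2 t⟫) := by
  intro p q
  have hJD' : ∀ y : W₂, J.symm (D₂ y) = D₁ (J.symm y) := by
    intro y
    apply J.injective
    simp [hJD]
  -- J.symm transports Lcheck for D₂ to Lcheck for D₁
  have hLcheck : ∀ (g : ZMod N → W₂) (t : ZMod N),
      J.symm (Lcheck N D₂ g t) = Lcheck N D₁ (fun s => J.symm (g s)) t := by
    intro g t
    simp only [Lcheck, map_smul, map_sub]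
    congr 1
    congr 1
    exact map_exp_of_comm J.symm D₂ D₁ hJD' (-(N : ℝ)⁻¹) (g (t - 1))
  -- inner product transport
  have hinn : ∀ (x : W₁) (y : W₂), ⟪J x, y⟫ = ⟪x, J.symm y⟫ := by
    intro x y
    rw [← J.inner_map_map x (J.symm y), J.apply_symm_apply]
  congr 1
  simp only [blockLT]
  set ph : ZMod N → W₁ := fun s => J.symm (p.2 s) with hph
  set qh : ZMod N → W₁ := fun s => J.symm (q.2 s) with hqh
  have e1 : ∀ t : ZMod N, ⟪p.1 t, -(J.symm (Lcheck N D₂ q.2 t))⟫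
      = -⟪p.1 t, Lcheck N D₁ qh t⟫ := by
    intro t
    rw [inner_neg_right, hLcheck]
  have e2 : ∀ t : ZMod N, ⟪p.2 t, J (Lhat N D₁ q.1 t)⟫ = ⟪Lhat N D₁ q.1 t, ph t⟫ := by
    intro t
    rw [real_inner_comm, hinn]
  have e3 : ∀ t : ZMod N, ⟪-(J.symm (Lcheck N D₂ p.2 t)), q.1 t⟫
      = -⟪q.1 t, Lcheck N D₁ ph t⟫ := by
    intro t
    rw [inner_neg_left, hLcheck, real_inner_comm]
  have e4 : ∀ t : ZMod N, ⟪J (Lhat N D₁ p.1 t), q.2 t⟫ = ⟪Lhat N D₁ p.1 t, qh t⟫ := by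
    intro t
    rw [hinn]
  simp only [e1, e2, e3, e4, Finset.sum_add_distrib, Finset.sum_neg_distrib]
  rw [sum_Lhat_inner N D₁ hD₁ q.1 ph, sum_Lhat_inner N D₁ hD₁ p.1 qh]
  have : ∑ t : ZMod N, ⟪q.1 t, Lcheck N D₁ ph t⟫
      = ∑ t : ZMod N, ⟪q.1 t, Lcheck N D₁ ph t⟫ := rfl
  ring
end
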